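/- arXiv:2312.11873 — 5 statements merged into one kernel-verified Lean document; each statement's English description precedes it below -/
import Mathlib

section
/- Let t be a substring of T and let s ∈ S_t. Then t occurs in s exactly once; that is, there is exactly one pair (a, b) with 1 ≤ a ≤ b ≤ |s| such that s[a, b] = t. -/
/-- `frag T i j` is the fragment `T[i, j]` of `T` (1-indexed, inclusive). -/
def frag {α : Type*} (T : List α) (i j : ℕ) : List α := (T.drop (i - 1)).take (j - i + 1)

/-- `t` is a substring of `T`, i.e. `t = T[i, j]` for some `1 ≤ i ≤ j ≤ |T|`. -/
def IsSub {α : Type*} (T t : List α) : Prop :=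
  ∃ i j : ℕ, 1 ≤ i ∧ i ≤ j ∧ j ≤ T.length ∧ frag T i j = t

/-- `occ T t` is the set of occurrences of `t` in `T`: pairs `(i, j)` with
`1 ≤ i ≤ j ≤ |T|` and `T[i, j] = t`. -/
def occ {α : Type*} (T t : List α) : Set (ℕ × ℕ) :=
  {p | 1 ≤ p.1 ∧ p.1 ≤ p.2 ∧ p.2 ≤ T.length ∧ frag T p.1 p.2 = t}

/-- `Sset T t` is the set `S_t`: substrings `s` of `T` such that `t` occurs in `s`
and `|occ_T(t)| = |occ_T(s)|`. -/
def Sset {α : Type*} (T t : List α) : Set (List α) :=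
  {s | IsSub T s ∧ (∃ a b : ℕ, 1 ≤ a ∧ a ≤ b ∧ b ≤ s.length ∧ frag s a b = t) ∧
    (occ T t).ncard = (occ T s).ncard}

lemma frag_length {α : Type*} (T : List α) (i j : ℕ) (h1 : 1 ≤ i) (h2 : i ≤ j)
    (h3 : j ≤ T.length) : (frag T i j).length = j - i + 1 := by
  simp [frag]; omega

lemma occ_snd {α : Type*} {T u : List α} {i j : ℕ} (h : (i,j) ∈ occ T u) :
    j + 1 = i + u.length := by
  obtain ⟨h1, h2, h3, h4⟩ := h
  have := frag_length T i j h1 h2 h3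
  rw [h4] at this; omega

lemma occ_comp {α : Type*} {T s t : List α} {i j a b : ℕ}
    (hij : (i,j) ∈ occ T s) (hab : (a,b) ∈ occ s t) :
    (i+a-1, i+b-1) ∈ occ T t := by
  obtain ⟨h1, h2, h3, h4⟩ := hij
  obtain ⟨h1', h2', h3', h4'⟩ := hab
  have hslen : s.length = j - i + 1 := by
    rw [← h4]; exact frag_length T i j h1 h2 h3
  refine ⟨by omega, by omega, by omega, ?_⟩
  subst h4
  unfold frag at h4' ⊢
  rw [List.drop_take, List.drop_drop] at h4'
  rw [← h4', List.take_take]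
  congr 1
  · omega
  · congr 1; omega

lemma occ_finite {α : Type*} (T u : List α) : (occ T u).Finite := by
  apply Set.Finite.subset ((Set.finite_Icc 1 T.length).prod (Set.finite_Icc 1 T.length))
  rintro ⟨i, j⟩ ⟨h1, h2, h3, _⟩
  exact ⟨⟨h1, le_trans h2 h3⟩, ⟨le_trans h1 h2, h3⟩⟩

lemma no_two {α : Type*} (T t s : List α) (hsub : IsSub T s)
    (hcard : (occ T t).ncard = (occ T s).ncard) {a b a' b' : ℕ}
    (h1 : (a,b) ∈ occ s t) (h2 : (a',b') ∈ occ s t) (hlt : a < a') : False := by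
  set A := occ T s with hA
  set B := occ T t with hB
  set f : ℕ × ℕ → ℕ × ℕ := fun p => (p.1 + a - 1, p.1 + b - 1) with hf
  have hmaps : f '' A ⊆ B := by
    rintro _ ⟨⟨i, j⟩, hij, rfl⟩
    exact occ_comp hij h1
  have hinj : Set.InjOn f A := by
    rintro ⟨i, j⟩ hij ⟨i', j'⟩ hij' heq
    have ha : 1 ≤ a := h1.1
    have e1 : i + a - 1 = i' + a - 1 := congrArg Prod.fst heq
    have hi1 : 1 ≤ i := hij.1
    have hi1' : 1 ≤ i' := hij'.1
    have hii : i = i' := by omega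
    have := occ_snd hij
    have := occ_snd hij'
    simp only [Prod.mk.injEq]
    omega
  have himg : f '' A = B := by
    refine Set.eq_of_subset_of_ncard_le hmaps ?_ (occ_finite T t)
    rw [Set.ncard_image_of_injOn hinj, ← hcard]
  -- chain
  set d := a' - a with hd
  have hd1 : 1 ≤ d := by omega
  have step : ∀ p ∈ A, ∃ q ∈ A, q.1 = p.1 + d := by
    rintro ⟨i, j⟩ hij
    have hmem : (i + a' - 1, i + b' - 1) ∈ B := occ_comp hij h2
    rw [← himg] at hmem
    obtain ⟨⟨i', j'⟩, hq, heq⟩ := hmem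
    refine ⟨(i', j'), hq, ?_⟩
    have e1 : i' + a - 1 = i + a' - 1 := congrArg Prod.fst heq
    have ha : 1 ≤ a := h1.1
    have hi1 : 1 ≤ i := hij.1
    have hi1' : 1 ≤ i' := hq.1
    simp only
    omega
  obtain ⟨i₀, j₀, hi1, hij, hjn, hfrag⟩ := hsub
  have hstart : (i₀, j₀) ∈ A := ⟨hi1, hij, hjn, hfrag⟩
  have chain : ∀ k : ℕ, ∃ p ∈ A, i₀ + k * d ≤ p.1 := by
    intro k
    induction k with
    | zero => exact ⟨(i₀, j₀), hstart, by omega⟩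
    | succ k ih =>
      obtain ⟨p, hp, hle⟩ := ih
      obtain ⟨q, hq, hqe⟩ := step p hp
      exact ⟨q, hq, by rw [hqe]; nlinarith⟩
  obtain ⟨p, hp, hle⟩ := chain (T.length + 1)
  have h2' : p.1 ≤ T.length := le_trans hp.2.1 hp.2.2.1
  nlinarith

/-- If `t` is a substring of `T` and `s ∈ S_t`, then `t` occurs in `s` exactly once:
there is exactly one pair `(a, b)` with `1 ≤ a ≤ b ≤ |s|` and `s[a, b] = t`. -/
theorem occursOnce {α : Type*} (T t s : List α) (ht : IsSub T t) (hs : s ∈ Sset T t) :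
    ∃! p : ℕ × ℕ, 1 ≤ p.1 ∧ p.1 ≤ p.2 ∧ p.2 ≤ s.length ∧ frag s p.1 p.2 = t := by
  obtain ⟨hsub, ⟨a₀, b₀, h₀⟩, hcard⟩ := hs
  have h₀' : (a₀, b₀) ∈ occ s t := h₀
  refine ⟨(a₀, b₀), h₀, ?_⟩
  rintro ⟨a, b⟩ h
  have h' : (a, b) ∈ occ s t := h
  have hae : a = a₀ := by
    rcases lt_trichotomy a a₀ with hlt | heq | hgt
    · exact absurd (no_two T t s hsub hcard h' h₀' hlt) (not_false)
    · exact heq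
    · exact absurd (no_two T t s hsub hcard h₀' h' hgt) (not_false)
  have := occ_snd h'
  have := occ_snd h₀'
  simp only [Prod.mk.injEq]
  omega
end

section
/- Let t be a substring of T, let (l, r) = pos(t) and (l', r') = pos(ext(t)). Then S_t = { T[L, R] : l' ≤ L ≤ l and r ≤ R ≤ r' }. -/
/-- `IsExt T t e` says that `e` is a longest string in `S_t`, i.e. `e = ext(t)`. -/
def IsExt {α : Type*} (T t e : List α) : Prop :=
  e ∈ Sset T t ∧ ∀ s ∈ Sset T t, s.length ≤ e.length

/-- `IsPos T t (l, r)` says that `(l, r) = pos(t)`, the first occurrence of `t` in `T`. -/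
def IsPos {α : Type*} (T t : List α) (p : ℕ × ℕ) : Prop :=
  p ∈ occ T t ∧ ∀ q ∈ occ T t, p.1 ≤ q.1
namespace SsetAux
variable {α : Type*}

def Occ0 (T t : List α) : Set ℕ := {p | p + t.length ≤ T.length ∧ (T.drop p).take t.length = t}

lemma occ0_finite (T t : List α) : (Occ0 T t).Finite :=
  (Set.finite_Iic T.length).subset fun p hp => le_trans (Nat.le_add_right _ _) hp.1

lemma occ0_get {T t : List α} {p : ℕ} (h : p ∈ Occ0 T t) :
    ∀ k < t.length, T[p+k]? = t[k]? := by
  intro k hk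
  conv_rhs => rw [← h.2]
  rw [List.getElem?_take, if_pos hk, List.getElem?_drop]

lemma occ0_of_get {T t : List α} {p : ℕ} (hb : p + t.length ≤ T.length)
    (h : ∀ k < t.length, T[p+k]? = t[k]?) : p ∈ Occ0 T t := by
  refine ⟨hb, List.ext_getElem? fun k => ?_⟩
  rw [List.getElem?_take]
  by_cases hk : k < t.length
  · rw [if_pos hk, List.getElem?_drop, h k hk]
  · rw [if_neg hk]
    exact (List.getElem?_eq_none (le_of_not_gt hk)).symm

lemma occ0_sub {T s t : List α} {p a : ℕ} (hs : p ∈ Occ0 T s)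
    (hle : a + t.length ≤ s.length) (hocc : (s.drop a).take t.length = t) :
    p + a ∈ Occ0 T t := by
  have hb := hs.1
  apply occ0_of_get (by omega)
  intro k hk
  have h1 := occ0_get hs (a+k) (by omega)
  rw [show p+a+k = p+(a+k) by ring, h1, ← hocc, List.getElem?_take, if_pos hk,
    List.getElem?_drop]

lemma occ_eq_image (T t : List α) (ht : 0 < t.length) :
    occ T t = (fun p => (p + 1, p + t.length)) '' Occ0 T t := by
  ext ⟨i, j⟩
  constructor
  · rintro ⟨h1, h2, h3, h4⟩
    have hlen : t.length = j - i + 1 := by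
      rw [← h4]; simp [frag]; omega
    refine ⟨i - 1, ⟨by omega, ?_⟩, ?_⟩
    · rw [hlen, ← h4]; rfl
    · simp only [Prod.mk.injEq]; omega
  · rintro ⟨p, ⟨hb, hq⟩, heq⟩
    simp only [Prod.mk.injEq] at heq
    obtain ⟨rfl, rfl⟩ := heq
    refine ⟨by omega, by omega, by omega, ?_⟩
    have e1 : p + 1 - 1 = p := by omega
    have e2 : p + t.length - (p+1) + 1 = t.length := by omega
    rw [frag, e1, e2]; exact hq

lemma ncard_occ (T t : List α) (ht : 0 < t.length) :
    (occ T t).ncard = (Occ0 T t).ncard := by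
  rw [occ_eq_image T t ht]
  exact Set.ncard_image_of_injective _ (fun p q h => by
    simpa using congrArg Prod.fst h)

lemma occ_of_occ0 {T t : List α} {p : ℕ} (h : p ∈ Occ0 T t) (ht : 0 < t.length) :
    (p+1, p+t.length) ∈ occ T t := by
  rw [occ_eq_image T t ht]; exact ⟨p, h, rfl⟩

lemma ncard_le (T : List α) {s t : List α} {a : ℕ}
    (hle : a + t.length ≤ s.length) (hocc : (s.drop a).take t.length = t) :
    (Occ0 T s).ncard ≤ (Occ0 T t).ncard := by
  have himg : (· + a) '' Occ0 T s ⊆ Occ0 T t := by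
    rintro _ ⟨p, hp, rfl⟩; exact occ0_sub hp hle hocc
  calc (Occ0 T s).ncard = ((· + a) '' Occ0 T s).ncard :=
        (Set.ncard_image_of_injective _ (add_left_injective a)).symm
    _ ≤ _ := Set.ncard_le_ncard himg (occ0_finite T t)

lemma occ0_surj (T : List α) {s t : List α} {a : ℕ}
    (hle : a + t.length ≤ s.length) (hocc : (s.drop a).take t.length = t)
    (hcard : (Occ0 T t).ncard ≤ (Occ0 T s).ncard) :
    ∀ q ∈ Occ0 T t, ∃ p ∈ Occ0 T s, p + a = q := by
  have himg : (· + a) '' Occ0 T s ⊆ Occ0 T t := by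
    rintro _ ⟨p, hp, rfl⟩; exact occ0_sub hp hle hocc
  have heq := Set.eq_of_subset_of_ncard_le himg
    (by rw [Set.ncard_image_of_injective _ (add_left_injective a)]; exact hcard)
    (occ0_finite T t)
  intro q hq
  rw [← heq] at hq
  obtain ⟨p, hp, h⟩ := hq
  exact ⟨p, hp, h⟩

lemma offset_of_frag {s t : List α} {a b : ℕ} (h1 : 1 ≤ a) (h2 : a ≤ b) (h3 : b ≤ s.length)
    (h4 : frag s a b = t) : t.length = b - a + 1 ∧ (a - 1) ∈ Occ0 s t := by
  have hlen : t.length = b - a + 1 := by rw [← h4]; simp [frag]; omega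
  refine ⟨hlen, ⟨by omega, ?_⟩⟩
  rw [hlen, ← h4]; rfl

lemma frag_nest (T : List α) {u M z mt : ℕ} (huz : u ≤ z) (hzM : z + mt ≤ M) :
    (((T.drop u).take (M - u)).drop (z - u)).take mt = (T.drop z).take mt := by
  have e1 : u + (z - u) = z := by omega
  have e2 : mt ⊓ (M - u - (z - u)) = mt := by omega
  rw [List.drop_take, List.drop_drop, e1, List.take_take, e2]

lemma union_occ {T s e t : List α} {x y z d : ℕ}
    (hx : x ∈ Occ0 T s) (hy : y ∈ Occ0 T e)
    (hxd : x + d ∈ Occ0 T s) (hyd : y + d ∈ Occ0 T e)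
    (hxz : x ≤ z) (hzx : z + t.length ≤ x + s.length)
    (hyz : y ≤ z) (hzy : z + t.length ≤ y + e.length)
    (hm : 0 < t.length) :
    min x y + d ∈
      Occ0 T ((T.drop (min x y)).take (max (x + s.length) (y + e.length) - min x y)) := by
  have hbx := hx.1
  have hby := hy.1
  have hbxd := hxd.1
  have hbyd := hyd.1
  have hlenw : ((T.drop (min x y)).take (max (x + s.length) (y + e.length) - min x y)).length
      = max (x + s.length) (y + e.length) - min x y := by
    simp; omega
  apply occ0_of_get
  · rw [hlenw]; omega
  · intro k hk
    rw [hlenw] at hk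
    have hw : T[min x y + k]?
        = ((T.drop (min x y)).take (max (x + s.length) (y + e.length) - min x y))[k]? := by
      rw [List.getElem?_take, if_pos hk, List.getElem?_drop]
    rw [← hw]
    by_cases hcs : x ≤ min x y + k ∧ min x y + k < x + s.length
    · have h1 := occ0_get hx (min x y + k - x) (by omega)
      have h2 := occ0_get hxd (min x y + k - x) (by omega)
      rw [show min x y + d + k = x + d + (min x y + k - x) by omega, h2, ← h1,
        show x + (min x y + k - x) = min x y + k by omega]
    · have hce : y ≤ min x y + k ∧ min x y + k < y + e.length := by omega
      have h1 := occ0_get hy (min x y + k - y) (by omega)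
      have h2 := occ0_get hyd (min x y + k - y) (by omega)
      rw [show min x y + d + k = y + d + (min x y + k - y) by omega, h2, ← h1,
        show y + (min x y + k - y) = min x y + k by omega]

end SsetAux

open SsetAux in
/-- If `t` is a substring of `T`, `(l, r) = pos(t)` and `(l', r') = pos(ext(t))`, then
`S_t = { T[L, R] : l' ≤ L ≤ l, r ≤ R ≤ r' }`. -/
theorem SsetDescription {α : Type*} (T t e : List α) (ht : IsSub T t) (he : IsExt T t e)
    (l r l' r' : ℕ) (hp : IsPos T t (l, r)) (hp' : IsPos T e (l', r')) :
    Sset T t = {s | ∃ L R : ℕ, l' ≤ L ∧ L ≤ l ∧ r ≤ R ∧ R ≤ r' ∧ s = frag T L R} := by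
  classical
  obtain ⟨he1, he2⟩ := he
  obtain ⟨hocc1, hminT⟩ := hp
  obtain ⟨hocc2, hminE⟩ := hp'
  simp only [occ, Set.mem_setOf_eq] at hocc1 hocc2
  obtain ⟨hl1, hlr, hrn, hfrt⟩ := hocc1
  obtain ⟨hl'1, hlr', hr'n, hfre⟩ := hocc2
  obtain ⟨htlen, hz⟩ := offset_of_frag hl1 hlr hrn hfrt
  obtain ⟨helen, hy⟩ := offset_of_frag hl'1 hlr' hr'n hfre
  have hm : 0 < t.length := by omega
  have hme : 0 < e.length := by omega
  have hminT0 : ∀ p ∈ Occ0 T t, l - 1 ≤ p := by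
    intro p hp0
    have := hminT _ (occ_of_occ0 hp0 hm)
    simp only at this; omega
  have hminE0 : ∀ p ∈ Occ0 T e, l' - 1 ≤ p := by
    intro p hp0
    have := hminE _ (occ_of_occ0 hp0 hme)
    simp only at this; omega
  obtain ⟨hesub, ⟨a, b, ha1, hab, hb, hfr⟩, hecard⟩ := he1
  obtain ⟨htab, hae⟩ := offset_of_frag ha1 hab hb hfr
  have haeb : (a - 1) + t.length ≤ e.length := hae.1
  have hcet : (Occ0 T t).ncard = (Occ0 T e).ncard := by
    rw [← ncard_occ T t hm, ← ncard_occ T e hme]; exact hecard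
  obtain ⟨pz, hpzE, hpz⟩ := occ0_surj T hae.1 hae.2 hcet.le (l-1) hz
  have halign1 : l - 1 ≤ (l'-1) + (a-1) := hminT0 _ (occ0_sub hy hae.1 hae.2)
  have halign2 : l' - 1 ≤ pz := hminE0 _ hpzE
  have hzy : l - 1 = (l'-1) + (a-1) := by omega
  have hrz : r = (l-1) + t.length := by omega
  have hr'z : r' = (l'-1) + e.length := by omega
  ext s
  simp only [Sset, Set.mem_setOf_eq]
  constructor
  · rintro ⟨hssub, ⟨c, d0, hc1, hcd, hd0, hfrs⟩, hscard⟩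
    obtain ⟨htcd, hcs⟩ := offset_of_frag hc1 hcd hd0 hfrs
    have hcsb : (c - 1) + t.length ≤ s.length := hcs.1
    have hsm : 0 < s.length := by omega
    have hcst : (Occ0 T t).ncard = (Occ0 T s).ncard := by
      rw [← ncard_occ T t hm, ← ncard_occ T s hsm]; exact hscard
    obtain ⟨x, hxS, hxz⟩ := occ0_surj T hcs.1 hcs.2 hcst.le (l-1) hz
    have hxle : x ≤ l - 1 := by omega
    have hzxs : (l-1) + t.length ≤ x + s.length := by omega
    obtain ⟨u, hu⟩ : ∃ u, u = min x (l'-1) := ⟨_, rfl⟩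
    obtain ⟨M, hM⟩ : ∃ M, M = max (x + s.length) ((l'-1) + e.length) := ⟨_, rfl⟩
    obtain ⟨w, hwdef⟩ : ∃ w, w = (T.drop u).take (M - u) := ⟨_, rfl⟩
    have hxb := hxS.1
    have hyb := hy.1
    have hyz : l' - 1 ≤ l - 1 := by omega
    have hzye : (l-1) + t.length ≤ (l'-1) + e.length := by omega
    have huz : u ≤ l - 1 := by omega
    have hzM : (l-1) + t.length ≤ M := by omega
    have hwlen : w.length = M - u := by rw [hwdef]; simp; omega
    have hwm : 0 < w.length := by rw [hwlen]; omega
    have hwocc : u ∈ Occ0 T w := ⟨by rw [hwlen]; omega, by rw [hwlen, hwdef]⟩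
    have htw2 : (w.drop ((l-1) - u)).take t.length = t := by
      rw [hwdef]
      exact (frag_nest T huz hzM).trans hz.2
    have htw1 : ((l-1) - u) + t.length ≤ w.length := by rw [hwlen]; omega
    have hwt_le : (Occ0 T w).ncard ≤ (Occ0 T t).ncard := ncard_le T htw1 htw2
    have hmaps : ∀ q ∈ Occ0 T t, u + (q - (l-1)) ∈ Occ0 T w := by
      intro q hq
      have hzq : l - 1 ≤ q := hminT0 q hq
      obtain ⟨ps, hps, hpsq⟩ := occ0_surj T hcs.1 hcs.2 hcst.le q hq
      obtain ⟨pe, hpe, hpeq⟩ := occ0_surj T hae.1 hae.2 hcet.le q hq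
      have hpsx : ps = x + (q - (l-1)) := by omega
      have hpey : pe = (l'-1) + (q - (l-1)) := by omega
      rw [hpsx] at hps
      rw [hpey] at hpe
      have hun := union_occ hxS hy hps hpe hxle hzxs hyz hzye hm
      rw [← hu, ← hM, ← hwdef] at hun
      exact hun
    have htw_ge : (Occ0 T t).ncard ≤ (Occ0 T w).ncard := by
      have himg : (fun q => u + (q - (l-1))) '' Occ0 T t ⊆ Occ0 T w := by
        rintro _ ⟨q, hq, rfl⟩; exact hmaps q hq
      have hinj : Set.InjOn (fun q => u + (q - (l-1))) (Occ0 T t) := by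
        intro q1 h1 q2 h2 h
        have a1 := hminT0 q1 h1
        have a2 := hminT0 q2 h2
        have h' : u + (q1 - (l-1)) = u + (q2 - (l-1)) := h
        omega
      calc (Occ0 T t).ncard = ((fun q => u + (q - (l-1))) '' Occ0 T t).ncard :=
            (Set.ncard_image_of_injOn hinj).symm
        _ ≤ _ := Set.ncard_le_ncard himg (occ0_finite T w)
    have hwS : w ∈ Sset T t := by
      simp only [Sset, Set.mem_setOf_eq]
      refine ⟨⟨u+1, M, by omega, by omega, by omega, ?_⟩,
        ⟨(l-1)-u+1, (l-1)-u+t.length, by omega, by omega, by rw [hwlen]; omega, ?_⟩, ?_⟩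
      · have e1 : u + 1 - 1 = u := by omega
        have e2 : M - (u+1) + 1 = M - u := by omega
        rw [frag, e1, e2, hwdef]
      · have e1 : (l-1)-u+1-1 = (l-1)-u := by omega
        have e2 : (l-1)-u+t.length - ((l-1)-u+1) + 1 = t.length := by omega
        rw [frag, e1, e2]; exact htw2
      · rw [ncard_occ T t hm, ncard_occ T w hwm]
        exact le_antisymm htw_ge hwt_le
    have hwe := he2 w hwS
    rw [hwlen] at hwe
    refine ⟨x+1, x+s.length, by omega, by omega, by omega, by omega, ?_⟩
    have e1 : x+1-1 = x := by omega
    have e2 : x+s.length-(x+1)+1 = s.length := by omega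
    rw [frag, e1, e2]; exact hxS.2.symm
  · rintro ⟨L, R, hL1, hL2, hR1, hR2, rfl⟩
    have hL0 : 1 ≤ L := by omega
    have hslen : (frag T L R).length = R - L + 1 := by simp [frag]; omega
    have hsm : 0 < (frag T L R).length := by omega
    have hXs : (L-1) ∈ Occ0 T (frag T L R) :=
      ⟨by rw [hslen]; omega, by rw [hslen]; rfl⟩
    have hts : ((frag T L R).drop ((l-1)-(L-1))).take t.length = t := by
      have h := frag_nest T (u := L-1) (M := R) (z := l-1) (mt := t.length)
        (by omega) (by omega)
      have e3 : R - (L-1) = R - L + 1 := by omega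
      rw [e3] at h
      show (((T.drop (L-1)).take (R-L+1)).drop ((l-1)-(L-1))).take t.length = t
      rw [h]; exact hz.2
    have hse : (e.drop ((L-1)-(l'-1))).take (frag T L R).length = frag T L R := by
      have h := frag_nest T (u := l'-1) (M := (l'-1)+e.length) (z := L-1) (mt := R-L+1)
        (by omega) (by omega)
      have e4 : (l'-1) + e.length - (l'-1) = e.length := by omega
      rw [e4, hy.2] at h
      rw [hslen]
      exact h.trans rfl
    have hsle : ((L-1)-(l'-1)) + (frag T L R).length ≤ e.length := by rw [hslen]; omega
    have hnle1 : (Occ0 T (frag T L R)).ncard ≤ (Occ0 T t).ncard :=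
      ncard_le T (by rw [hslen]; omega) hts
    have hnle2 : (Occ0 T e).ncard ≤ (Occ0 T (frag T L R)).ncard :=
      ncard_le T hsle hse
    refine ⟨⟨L, R, by omega, by omega, by omega, rfl⟩,
      ⟨(l-1)-(L-1)+1, (l-1)-(L-1)+t.length, by omega, by omega, by rw [hslen]; omega, ?_⟩, ?_⟩
    · have e1 : (l-1)-(L-1)+1-1 = (l-1)-(L-1) := by omega
      have e2 : (l-1)-(L-1)+t.length - ((l-1)-(L-1)+1) + 1 = t.length := by omega
      rw [frag, e1, e2]; exact hts
    · rw [ncard_occ T t hm, ncard_occ T (frag T L R) hsm]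
      omega
end

section
/- Let W be a nonempty string over Σ, let S be the set consisting of the empty string together with all distinct nonempty substrings of W, and let a : S → ℤ be any function with a(ε) = 0. For u ∈ S, define f(u) = Σ_{v ∈ S, v is a suffix of u} a(v) (the sum over all distinct suffixes of u, including u itself and the empty string). For u ∈ S, say a string c·u (c a single character) is a child of u if c·u ∈ S; u is a leaf if it has no children, and let c(u) denote the number of children of u. Then Σ_{u ∈ S} a(u) = Σ_{u ∈ S, u a leaf} f(u) − Σ_{u ∈ S, u not a leaf} (c(u) − 1)·f(u). -/
/-- The set `S` of vertices of the trie of substrings of `W`: the empty string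
together with all distinct nonempty substrings of `W` (i.e. all infixes of `W`,
obtained as prefixes of suffixes of `W`). -/
def trieVerts {α : Type*} [DecidableEq α] (W : List α) : Finset (List α) :=
  (W.tails.flatMap List.inits).toFinset

/-- `f(u) = Σ_{v ∈ S, v suffix of u} a(v)`: the sum of `a` over the ancestors of `u`
in the (reversed) trie, i.e. over all distinct suffixes of `u` lying in `S`. -/
def fval {α : Type*} [DecidableEq α] (W : List α) (a : List α → ℤ) (u : List α) : ℤ :=
  ∑ v ∈ (trieVerts W).filter (fun v => v <:+ u), a v

/-- `c(u)`: the number of children of `u`, i.e. the number of one-character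
left-extensions `ch :: u` of `u` lying in `S` (such a character must occur in `W`). -/
def nchild {α : Type*} [DecidableEq α] (W : List α) (u : List α) : ℕ :=
  (W.toFinset.filter (fun ch => ch :: u ∈ trieVerts W)).card

/-!
Every nonempty vertex `w = c :: u` of the trie has exactly one parent, its tail `u`, and
`f(w) = a(w) + f(u)`. Hence summing over the nonempty vertices gives both
`Σ_u c(u) f(u) = Σ_{w ≠ ε} f(tail w)` and `Σ_u (f(u) - a(u)) = Σ_{w ≠ ε} f(tail w)`, so
`Σ_u a(u) = Σ_u (1 - c(u)) f(u)`; splitting off the leaves, where `c(u) = 0`, gives the identity.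
-/

section

variable {α : Type*} [DecidableEq α]

lemma mem_trieVerts {W u : List α} : u ∈ trieVerts W ↔ u <:+: W := by
  simp only [trieVerts, List.mem_toFinset, List.mem_flatMap, List.mem_tails, List.mem_inits,
    List.infix_iff_prefix_suffix]
  tauto

lemma nil_mem_trieVerts (W : List α) : [] ∈ trieVerts W :=
  mem_trieVerts.2 List.nil_infix

lemma mem_trieVerts_of_suffix {W u v : List α} (h : v <:+ u) (hu : u ∈ trieVerts W) :
    v ∈ trieVerts W :=
  mem_trieVerts.2 (h.isInfix.trans (mem_trieVerts.1 hu))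

lemma mem_of_cons_mem_trieVerts {W : List α} {ch : α} {u : List α} (h : ch :: u ∈ trieVerts W) : ch ∈ W :=
  (mem_trieVerts.1 h).subset List.mem_cons_self

lemma fval_cons {W : List α} (a : List α → ℤ) {ch : α} {u : List α} (h : ch :: u ∈ trieVerts W) :
    fval W a (ch :: u) = a (ch :: u) + fval W a u := by
  have hsuffixes : (trieVerts W).filter (· <:+ ch :: u) =
      insert (ch :: u) ((trieVerts W).filter (· <:+ u)) := by
    ext v
    simp only [Finset.mem_filter, Finset.mem_insert, List.suffix_cons_iff]
    constructor
    · rintro ⟨hv, rfl | hvu⟩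
      exacts [Or.inl rfl, Or.inr ⟨hv, hvu⟩]
    · rintro (rfl | ⟨hv, hvu⟩)
      exacts [⟨h, Or.inl rfl⟩, ⟨hv, Or.inr hvu⟩]
  have hnotin : ch :: u ∉ (trieVerts W).filter (· <:+ u) := fun hmem =>
    absurd (Finset.mem_filter.1 hmem).2.length_le (by simp)
  rw [fval, hsuffixes, Finset.sum_insert hnotin, fval]

lemma fval_nil (W : List α) (a : List α → ℤ) : fval W a [] = a [] := by
  refine Finset.sum_eq_single_of_mem [] ?_ fun v hv hne => ?_
  · exact Finset.mem_filter.2 ⟨nil_mem_trieVerts W, List.suffix_refl _⟩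
  · exact absurd (List.suffix_nil.1 (Finset.mem_filter.1 hv).2) hne

lemma sum_fval_sub_self (W : List α) (a : List α → ℤ) :
    ∑ u ∈ trieVerts W, (fval W a u - a u) =
      ∑ w ∈ (trieVerts W).erase [], fval W a w.tail := by
  rw [← Finset.add_sum_erase _ _ (nil_mem_trieVerts W), fval_nil W, sub_self, zero_add]
  refine Finset.sum_congr rfl fun w hw => ?_
  obtain ⟨hne, hw⟩ := Finset.mem_erase.1 hw
  obtain ⟨ch, u, rfl⟩ := List.exists_cons_of_ne_nil hne
  rw [fval_cons a hw, add_sub_cancel_left, List.tail_cons]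

lemma image_cons_children (W u : List α) :
    (W.toFinset.filter (fun ch => ch :: u ∈ trieVerts W)).image (· :: u) =
      ((trieVerts W).erase []).filter (fun w => w.tail = u) := by
  ext w
  simp only [Finset.mem_image, Finset.mem_filter, Finset.mem_erase, List.mem_toFinset]
  constructor
  · rintro ⟨ch, ⟨-, hch⟩, rfl⟩
    exact ⟨⟨List.cons_ne_nil _ _, hch⟩, rfl⟩
  · rintro ⟨⟨hne, hw⟩, rfl⟩
    obtain ⟨ch, v, rfl⟩ := List.exists_cons_of_ne_nil hne
    exact ⟨ch, ⟨mem_of_cons_mem_trieVerts hw, hw⟩, rfl⟩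

lemma nchild_eq_card_tail_fiber (W u : List α) :
    nchild W u = (((trieVerts W).erase []).filter (fun w => w.tail = u)).card := by
  rw [nchild, ← image_cons_children,
    Finset.card_image_of_injective _ fun _ _ h => (List.cons.inj h).1]

lemma sum_nchild_smul {M : Type*} [AddCommMonoid M] (W : List α) (g : List α → M) :
    ∑ u ∈ trieVerts W, nchild W u • g u = ∑ w ∈ (trieVerts W).erase [], g w.tail := by
  rw [← Finset.sum_fiberwise_of_maps_to (g := List.tail) (t := trieVerts W)
    fun w hw => mem_trieVerts_of_suffix (List.tail_suffix w) (Finset.mem_of_mem_erase hw)]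
  refine Finset.sum_congr rfl fun u _ => ?_
  rw [nchild_eq_card_tail_fiber, ← Finset.sum_const]
  exact Finset.sum_congr rfl fun w hw => congrArg g (Finset.mem_filter.1 hw).2.symm

theorem sum_eq_sum_one_sub_nchild_mul_fval (W : List α) (a : List α → ℤ) :
    ∑ u ∈ trieVerts W, a u = ∑ u ∈ trieVerts W, (1 - (nchild W u : ℤ)) * fval W a u := by
  have hchildren := sum_nchild_smul W (fval W a)
  have hparents := sum_fval_sub_self W a
  simp only [nsmul_eq_mul, sub_mul, one_mul, Finset.sum_sub_distrib] at hchildren hparents ⊢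
  linarith

end

theorem trieIdentity_general {α : Type*} [DecidableEq α] (W : List α)
    (a : List α → ℤ) :
    ∑ u ∈ trieVerts W, a u =
      (∑ u ∈ (trieVerts W).filter (fun u => nchild W u = 0), fval W a u) -
        ∑ u ∈ (trieVerts W).filter (fun u => nchild W u ≠ 0),
          ((nchild W u : ℤ) - 1) * fval W a u := by
  rw [sum_eq_sum_one_sub_nchild_mul_fval, ← Finset.sum_filter_add_sum_filter_not _
    (fun u => nchild W u = 0), sub_eq_add_neg, ← Finset.sum_neg_distrib]
  congr 1 <;> refine Finset.sum_congr rfl fun u hu => ?_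
  · simp [(Finset.mem_filter.1 hu).2]
  · ring

/-- The trie identity: for a nonempty string `W`, `S` the set of the empty string and
all distinct nonempty substrings of `W`, and any `a : S → ℤ` with `a(ε) = 0`,
`Σ_{u ∈ S} a(u) = Σ_{u ∈ S leaf} f(u) − Σ_{u ∈ S not leaf} (c(u) − 1)·f(u)`,
where `u` is a leaf iff it has no children. -/
theorem trieIdentity {α : Type*} [DecidableEq α] (W : List α) (hW : W ≠ [])
    (a : List α → ℤ) (ha : a [] = 0) :
    ∑ u ∈ trieVerts W, a u =
      (∑ u ∈ (trieVerts W).filter (fun u => nchild W u = 0), fval W a u) -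
        ∑ u ∈ (trieVerts W).filter (fun u => nchild W u ≠ 0),
          ((nchild W u : ℤ) - 1) * fval W a u :=
  trieIdentity_general W a
end

section
/- Let T be a string of length n and let 1 ≤ l ≤ r ≤ n. Call a nonempty string u a leaf-substring of T[l, r] if u is a substring of T[l, r] and for no character c is the string c·u a substring of T[l, r]. Then there exists an integer x with l ≤ x ≤ r such that the set of leaf-substrings of T[l, r] is exactly { T[l, t] : x ≤ t ≤ r }. In particular, every leaf-substring of T[l, r] is a prefix of T[l, r], and T[l, r] itself is a leaf-substring. -/
lemma leaf_main {α : Type*} (W : List α) (hW : W ≠ []) :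
    ∃ m : ℕ, 1 ≤ m ∧ m ≤ W.length ∧
      ∀ u : List α, (u ≠ [] ∧ u <:+: W ∧ ∀ c : α, ¬ (c :: u) <:+: W) ↔
        ∃ k : ℕ, m ≤ k ∧ k ≤ W.length ∧ u = W.take k := by
  classical
  have hQlen : 1 ≤ W.length ∧ ∀ c : α, ¬ (c :: W.take W.length) <:+: W := by
    refine ⟨List.length_pos_iff.mpr hW, fun c h => ?_⟩
    have := h.length_le
    simp [List.take_length] at this
  have hE : ∃ k, 1 ≤ k ∧ ∀ c : α, ¬ (c :: W.take k) <:+: W := ⟨W.length, hQlen⟩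
  set m := Nat.find hE with hm
  have hspec := Nat.find_spec hE
  have hmle : m ≤ W.length := Nat.find_min' hE hQlen
  have hup : ∀ k, m ≤ k → ∀ c : α, ¬ (c :: W.take k) <:+: W := by
    intro k hk c h
    apply hspec.2 c
    have h1 : W.take m <+: W.take k := by
      rw [show W.take m = (W.take k).take m by rw [List.take_take, min_eq_left hk]]
      exact List.take_prefix _ _
    have h2 : (c :: W.take m) <+: (c :: W.take k) := by
      exact List.cons_prefix_cons.mpr ⟨rfl, h1⟩
    exact h2.isInfix.trans h
  have hpref : ∀ u : List α, u ≠ [] → u <:+: W → (∀ c : α, ¬ (c :: u) <:+: W) →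
      u <+: W := by
    rintro u hu ⟨s, t, hst⟩ hc
    rcases List.eq_nil_or_concat s with rfl | ⟨s', a, rfl⟩
    · exact ⟨t, by simpa using hst⟩
    · exact absurd ⟨s', t, by simpa using hst⟩ (hc a)
  refine ⟨m, hspec.1, hmle, fun u => ⟨?_, ?_⟩⟩
  · rintro ⟨hne, hinf, hext⟩
    have hp := hpref u hne hinf hext
    have htake : u = W.take u.length := List.prefix_iff_eq_take.mp hp
    refine ⟨u.length, ?_, hp.length_le, htake⟩
    exact Nat.find_min' hE ⟨List.length_pos_iff.mpr hne, by rw [← htake]; exact hext⟩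
  · rintro ⟨k, hmk, hkl, rfl⟩
    refine ⟨?_, (List.take_prefix _ _).isInfix, hup k hmk⟩
    simp only [ne_eq, List.take_eq_nil_iff]
    push_neg
    exact ⟨by omega, hW⟩

/-- A nonempty string `u` is a leaf-substring of `T[l, r]` if `u` is a substring of
`T[l, r]` and no one-character left-extension `c · u` is a substring of `T[l, r]`.
Then there is an `x` with `l ≤ x ≤ r` such that the leaf-substrings of `T[l, r]` are
exactly the prefixes `T[l, t]` for `x ≤ t ≤ r`; in particular every leaf-substring of
`T[l, r]` is a prefix of `T[l, r]`, and `T[l, r]` itself is a leaf-substring. -/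
theorem leafSubstrings {α : Type*} (T : List α) (l r : ℕ)
    (hl : 1 ≤ l) (hlr : l ≤ r) (hr : r ≤ T.length) :
    ∃ x : ℕ, l ≤ x ∧ x ≤ r ∧
      (∀ u : List α,
        (u ≠ [] ∧ u <:+: frag T l r ∧ ∀ c : α, ¬ (c :: u) <:+: frag T l r) ↔
          ∃ t : ℕ, x ≤ t ∧ t ≤ r ∧ u = frag T l t) ∧
      (∀ u : List α,
        (u ≠ [] ∧ u <:+: frag T l r ∧ ∀ c : α, ¬ (c :: u) <:+: frag T l r) →
          u <+: frag T l r) ∧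
      (frag T l r ≠ [] ∧ frag T l r <:+: frag T l r ∧
        ∀ c : α, ¬ (c :: frag T l r) <:+: frag T l r) := by
  set W := frag T l r with hWdef
  have hlen : W.length = r - l + 1 := by
    simp only [hWdef, frag, List.length_take, List.length_drop]
    omega
  have hWne : W ≠ [] := by
    intro h
    have := congrArg List.length h
    simp [hlen] at this
  have hfragt : ∀ t : ℕ, l ≤ t → t ≤ r → frag T l t = W.take (t - l + 1) := by
    intro t h1 h2
    simp only [hWdef, frag, List.take_take]
    congr 1
    omega
  obtain ⟨m, hm1, hm2, hiff⟩ := leaf_main W hWne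
  refine ⟨m + l - 1, by omega, by omega, ?_, ?_, ?_⟩
  · intro u
    rw [hiff u]
    constructor
    · rintro ⟨k, hmk, hkl, rfl⟩
      refine ⟨k + l - 1, by omega, by omega, ?_⟩
      rw [hfragt (k + l - 1) (by omega) (by omega)]
      congr 1
      omega
    · rintro ⟨t, ht1, ht2, rfl⟩
      refine ⟨t - l + 1, by omega, by omega, ?_⟩
      exact hfragt t (by omega) ht2
  · intro u hu
    rw [hiff u] at hu
    obtain ⟨k, hk1, hk2, rfl⟩ := hu
    exact List.take_prefix _ _
  · have := (hiff (frag T l r)).mpr ⟨r - l + 1, by omega, by omega, by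
      rw [← hlen, List.take_length]⟩
    exact this
end

section
/- Let T be a string of length n, let D be a set of nonempty substrings of T, and let 1 ≤ l ≤ r ≤ n. Call a pattern p ∈ D occurring in T[l, r] a leaf if p is not a proper suffix of any other pattern from D that occurs in T[l, r]. For l ≤ i ≤ r, let p_i denote the longest proper suffix of T[l, i] that belongs to D (when it exists). Then for any occurrence T[l', r'] of a leaf p in T[l, r] with l < l' ≤ r' ≤ r, one has p_{r'} = T[l', r'] = p; that is, p is the longest proper suffix of T[l, r'] belonging to D. -/
/-- Let `D` be a set of nonempty substrings of `T` and `1 ≤ l ≤ r ≤ |T|`. A pattern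
`p ∈ D` occurring in `T[l, r]` is a leaf if it is not a proper suffix of any other
pattern from `D` occurring in `T[l, r]`. If `T[l', r']` is an occurrence of a leaf `p`
in `T[l, r]` with `l < l' ≤ r' ≤ r`, then `p` is the longest proper suffix of
`T[l, r']` that belongs to `D` (i.e. `p_{r'} = T[l', r'] = p`). -/
theorem leafIsLongestProperSuffix {α : Type*} (T : List α) (D : Set (List α))
    (hD : ∀ p ∈ D, p ≠ [] ∧ IsSub T p)
    (l r : ℕ) (hl : 1 ≤ l) (hlr : l ≤ r) (hr : r ≤ T.length)
    (p : List α) (hp : p ∈ D) (hpocc : p <:+: frag T l r)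
    (hleaf : ¬ ∃ q ∈ D, q <:+: frag T l r ∧ p <:+ q ∧ p ≠ q)
    (l' r' : ℕ) (hll' : l < l') (hl'r' : l' ≤ r') (hr'r : r' ≤ r)
    (hocc : frag T l' r' = p) :
    p <:+ frag T l r' ∧ p ≠ frag T l r' ∧
      ∀ q ∈ D, q <:+ frag T l r' → q ≠ frag T l r' → q.length ≤ p.length := by
  have hdrop : frag T l' r' = (frag T l r').drop (l' - l) := by
    unfold frag
    rw [List.drop_take, List.drop_drop]
    congr 1
    · omega
    · congr 1; omega
  have hsuf : p <:+ frag T l r' := by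
    rw [← hocc, hdrop]; exact List.drop_suffix _ _
  have hlen1 : (frag T l r').length = r' - l + 1 := by
    simp only [frag, List.length_take, List.length_drop]; omega
  have hlenp : p.length = r' - l' + 1 := by
    rw [← hocc]; simp only [frag, List.length_take, List.length_drop]; omega
  have hne : p ≠ frag T l r' := by
    intro h; rw [h, hlen1] at hlenp; omega
  refine ⟨hsuf, hne, ?_⟩
  intro q hq hqsuf hqne
  by_contra hlt
  push_neg at hlt
  have hpq : p <:+ q := List.suffix_of_suffix_length_le hsuf hqsuf (le_of_lt hlt)
  have hpre : frag T l r' <+: frag T l r := by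
    have : frag T l r' = (frag T l r).take (r' - l + 1) := by
      unfold frag; rw [List.take_take]; congr 1; omega
    rw [this]; exact List.take_prefix _ _
  have hqinf : q <:+: frag T l r := hqsuf.isInfix.trans hpre.isInfix
  exact hleaf ⟨q, hq, hqinf, hpq, fun h => by rw [h] at hlt; omega⟩
end
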